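/- Let d ≥ 3, N ≥ 2 be integers and let F = x₁^{d-1}x₂ + x₂^{d-1}x₃ + ⋯ + x_N^{d-1}x₁ be the Klein polynomial. If λ₁,…,λ_N ∈ ℂ^× satisfy F(λ₁x₁,…,λ_Nx_N) = F(x₁,…,x_N) identically, then λ_i = λ₁^{(1-d)^{i-1}} for all i, and λ₁^{1-(1-d)^N} = 1; in particular λ₁ is a root of unity of order dividing |1-(1-d)^N|. -/

import Mathlib

/-!
Substituting `x_j ↦ λ_j x_j` multiplies the monomial `x_i^{d-1} x_{i+1}` by `λ_i^{d-1} λ_{i+1}`.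
These monomials are pairwise distinct (the exponent `d - 1 ≥ 2` sits at `i` only), so invariance
forces `λ_i^{d-1} λ_{i+1} = 1` for every `i`. Read as a recurrence along the `N`-periodic sequence
of the `λ_i`, this gives `λ_{i+1} = λ_i^{1-d}`, hence `λ_i = λ_1^{(1-d)^{i-1}}`, and periodicity
`λ_{N+1} = λ_1` gives `λ_1^{1-(1-d)^N} = 1`.
-/

open MvPolynomial Finset

section DiagonalScaling

variable {R σ ι : Type*}

theorem coeff_sum_monomial_of_injective [CommSemiring R] [Fintype ι] {m : ι → σ →₀ ℕ}
    (hm : Function.Injective m) (c : ι → R) (a : ι) :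
    coeff (m a) (∑ i, monomial (m i) (c i)) = c a := by
  classical
  simp only [coeff_sum, coeff_monomial, hm.eq_iff, sum_ite_eq', mem_univ, if_true]

theorem eval_mul_monomial [CommSemiring R] (lam x : σ → R) (m : σ →₀ ℕ) (c : R) :
    eval (fun j => lam j * x j) (monomial m c)
      = eval x (monomial m (c * m.prod fun j e => lam j ^ e)) := by
  simp only [eval_monomial, mul_pow, Finsupp.prod_mul, mul_assoc]

theorem mul_prod_pow_eq_of_eval_mul_eq [CommRing R] [IsDomain R] [Infinite R] [Fintype ι]
    {m : ι → σ →₀ ℕ} (hm : Function.Injective m) (c : ι → R) (lam : σ → R)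
    (hinv : ∀ x : σ → R, eval (fun j => lam j * x j) (∑ i, monomial (m i) (c i))
      = eval x (∑ i, monomial (m i) (c i))) (a : ι) :
    c a * (m a).prod (fun j e => lam j ^ e) = c a := by
  have hpoly : ∑ i, monomial (m i) (c i * (m i).prod fun j e => lam j ^ e)
      = ∑ i, monomial (m i) (c i) :=
    MvPolynomial.funext fun x => by simpa only [map_sum, eval_mul_monomial] using hinv x
  simpa only [coeff_sum_monomial_of_injective hm] using congrArg (coeff (m a)) hpoly

end DiagonalScaling

section CyclicMonomials

variable {σ : Type*} {s : σ → σ} {e : ℕ}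

theorem injective_single_add_single (hs : ∀ a, s a ≠ a) (he : 2 ≤ e) :
    Function.Injective fun i => Finsupp.single i e + Finsupp.single (s i) 1 := by
  intro i a h
  have hi := DFunLike.congr_fun h i
  by_contra hne
  simp only [Finsupp.add_apply, Finsupp.single_eq_same, Finsupp.single_eq_of_ne (hs i).symm,
    Finsupp.single_eq_of_ne hne] at hi
  have hle : Finsupp.single (s a) 1 i ≤ 1 := by
    classical
    rw [Finsupp.single_apply]; split_ifs <;> omega
  omega

variable [Fintype σ] {R : Type*} [CommRing R] [IsDomain R] [Infinite R]

theorem pow_mul_eq_one_of_eval_mul_eq (hs : ∀ a, s a ≠ a) (he : 2 ≤ e) (lam : σ → R)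
    (hinv : ∀ x : σ → R, eval (fun j => lam j * x j) (∑ i, X i ^ e * X (s i))
      = eval x (∑ i, X i ^ e * X (s i))) (a : σ) :
    lam a ^ e * lam (s a) = 1 := by
  have hmon : ∀ i : σ, (X i ^ e * X (s i) : MvPolynomial σ R)
      = monomial (Finsupp.single i e + Finsupp.single (s i) 1) 1 := fun i => by
    rw [X_pow_eq_monomial, X, monomial_mul, one_mul]
  simp only [hmon] at hinv
  have hcoeff := mul_prod_pow_eq_of_eval_mul_eq (injective_single_add_single hs he) _ lam hinv a
  rwa [one_mul, Finsupp.prod_add_index' (fun _ => pow_zero _) (fun _ _ _ => pow_add _ _ _),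
    Finsupp.prod_single_index (by rw [pow_zero]), Finsupp.prod_single_index (by rw [pow_zero]),
    pow_one] at hcoeff

end CyclicMonomials

theorem eq_zpow_of_pow_mul_eq_one {M : Type*} [DivisionMonoid M] {e : ℕ} {u : ℕ → M}
    (h : ∀ k, u k ^ e * u (k + 1) = 1) (k : ℕ) : u k = u 0 ^ ((-e : ℤ) ^ k) := by
  induction k with
  | zero => simp
  | succ k ih =>
    rw [eq_inv_of_mul_eq_one_right (h k), ih, pow_succ, zpow_mul, zpow_neg, zpow_natCast]

theorem zpow_one_sub_eq_one_of_periodic {G : Type*} [GroupWithZero G] {e N : ℕ} {u : ℕ → G}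
    (h : ∀ k, u k ^ e * u (k + 1) = 1) (hN : 0 < N) (hper : u N = u 0) :
    u 0 ^ (1 - (-e : ℤ) ^ N) = 1 := by
  obtain ⟨n, rfl⟩ : ∃ n, N = n + 1 := ⟨N - 1, by omega⟩
  have hu0 : u 0 ≠ 0 := hper ▸ right_ne_zero_of_mul_eq_one (h n)
  rw [zpow_sub₀ hu0, zpow_one, ← eq_zpow_of_pow_mul_eq_one h, hper, div_self hu0]

/-- Diagonal symmetries of the Klein polynomial: if `λ₁,…,λ_N ∈ ℂˣ` preserve
`F = x₁^{d-1}x₂ + ⋯ + x_N^{d-1}x₁`, then `λ_i = λ₁^{(1-d)^{i-1}}` and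
`λ₁^{1-(1-d)^N} = 1`. -/
theorem stmt_8 (d N : ℕ) (hd : 3 ≤ d) (hN : 2 ≤ N)
    (F : MvPolynomial (Fin N) ℂ)
    (hF : F = ∑ i : Fin N,
      X i ^ (d - 1) * X (⟨(i.val + 1) % N, Nat.mod_lt _ (by omega)⟩ : Fin N))
    (lam : Fin N → ℂ)
    (hinv : ∀ x : Fin N → ℂ, eval (fun j : Fin N => lam j * x j) F = eval x F) :
    (∀ i : Fin N, lam i = (lam (⟨0, by omega⟩ : Fin N)) ^ ((1 - (d : ℤ)) ^ (i : ℕ))) ∧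
    (lam (⟨0, by omega⟩ : Fin N)) ^ ((1 : ℤ) - (1 - (d : ℤ)) ^ N) = 1 := by
  have hNpos : 0 < N := by omega
  have hsucc_ne : ∀ a : Fin N, (⟨(a.val + 1) % N, Nat.mod_lt _ hNpos⟩ : Fin N) ≠ a := by
    intro a h
    have hv : (a.val + 1) % N = a.val := congrArg Fin.val h
    rcases Nat.lt_or_ge (a.val + 1) N with h1 | h1
    · rw [Nat.mod_eq_of_lt h1] at hv; omega
    · rw [show a.val + 1 = N by omega, Nat.mod_self] at hv; omega
  subst hF
  have hcycle := pow_mul_eq_one_of_eval_mul_eq hsucc_ne (by omega) lam hinv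
  set u : ℕ → ℂ := fun k => lam ⟨k % N, Nat.mod_lt _ hNpos⟩ with hu
  have hrec : ∀ k, u k ^ (d - 1) * u (k + 1) = 1 := fun k => by
    simpa only [hu, Nat.mod_add_mod] using hcycle ⟨k % N, Nat.mod_lt _ hNpos⟩
  have hexp : (-((d - 1 : ℕ) : ℤ)) = 1 - d := by omega
  have hu0 : u 0 = lam ⟨0, by omega⟩ := by simp only [hu, Nat.zero_mod]
  refine ⟨fun i => ?_, ?_⟩
  · have hi := eq_zpow_of_pow_mul_eq_one hrec i
    rw [hu0, hexp] at hi
    simpa only [hu, Nat.mod_eq_of_lt i.isLt, Fin.eta] using hi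
  · have hper : u N = u 0 := by simp only [hu, Nat.mod_self, Nat.zero_mod]
    simpa only [hu0, hexp] using zpow_one_sub_eq_one_of_periodic hrec hNpos hper
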